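/- Let M be a log-convex sequence with M₀ = 1 and quotients m_j := M_{j+1}/M_j, let L be a positive sequence with L₀ = 1, let 0 < α ≤ 2 and A > 0, and let f ∈ A_{L,A}(S_α). Then: (i) the series T_M(f)(z) := ∑_{j=0}^∞ 2^{-j}·(M_j/m_j^j)·f(m_j·z) converges normally on S_α and defines a holomorphic function on S_α; (ii) for every j ∈ ℕ₀ and z ∈ S_α, (T_M(f))^{(j)}(z) = ∑_{n=0}^∞ 2^{-n}·(M_n/m_n^n)·m_n^j·f^{(j)}(m_n·z); in particular, if c_j := lim_{z→0, z∈S_α} f^{(j)}(z) exists, then lim_{z→0, z∈S_α} (T_M(f))^{(j)}(z) = R_j·c_j, where R_j := ∑_{n=0}^∞ 2^{-n}·(M_n/m_n^n)·m_n^j; (iii) T_M(f) ∈ A_{LM,A}(S_α) with ‖T_M(f)‖_{LM,A} ≤ 2·‖f‖_{L,A}, where LM := (L_j·M_j)_j. Hence T_M : A_{L,A}(S_α) → A_{LM,A}(S_α) is a continuous linear operator. -/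

import Mathlib

open Filter Complex Asymptotics
open scoped Topology BigOperators

noncomputable section

/-- The open sector in ℂ of opening `α·π` bisected by the positive real axis. -/
def Sector (α : ℝ) : Set ℂ := {z : ℂ | z ≠ 0 ∧ |Complex.arg z| < α * Real.pi / 2}

/-- The Roumieu ultraholomorphic class `A_{{M}}(S_α)`. -/
def ASet (M : ℕ → ℝ) (α : ℝ) : Set (ℂ → ℂ) :=
  {f | DifferentiableOn ℂ f (Sector α) ∧
    ∃ h > (0:ℝ), ∃ C : ℝ, ∀ j : ℕ, ∀ z ∈ Sector α,
      ‖iteratedDerivWithin j f (Sector α) z‖ ≤ C * h ^ j * M j}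

/-- Equivalence of sequences: `a_j ≤ A·B^j·b_j` and `b_j ≤ A·B^j·a_j`. -/
def SeqEquiv (a b : ℕ → ℝ) : Prop :=
  ∃ A > (0:ℝ), ∃ B > (0:ℝ), ∀ j : ℕ, a j ≤ A * B ^ j * b j ∧ b j ≤ A * B ^ j * a j

/-- Log-convexity: `L_j² ≤ L_{j-1}·L_{j+1}` for `j ≥ 1`. -/
def IsLogConvexSeq (L : ℕ → ℝ) : Prop := ∀ j : ℕ, L (j+1) ^ 2 ≤ L j * L (j+2)

/-- `Gbar s j = j^{s·j}` (with the convention `0⁰ = 1`, automatic for `rpow`). -/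
def Gbar (s : ℝ) (j : ℕ) : ℝ := (j : ℝ) ^ (s * (j : ℝ))

/-- Weight matrix: positive sequences, first term 1, nondecreasing in the parameter. -/
def IsWeightMatrix (M : ℝ → ℕ → ℝ) : Prop :=
  (∀ p > (0:ℝ), ∀ j : ℕ, 0 < M p j) ∧ (∀ p > (0:ℝ), M p 0 = 1) ∧
    (∀ p q : ℝ, 0 < p → p ≤ q → ∀ j : ℕ, M p j ≤ M q j)

/-- The class `A_{{𝓜}}(S_α)` associated with a weight matrix. -/
def AMatSet (M : ℝ → ℕ → ℝ) (α : ℝ) : Set (ℂ → ℂ) := {f | ∃ p > (0:ℝ), f ∈ ASet (M p) α}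

/-- `M̌_j = M_j/j!`. -/
def checkSeq (N : ℕ → ℝ) (j : ℕ) : ℝ := N j / (Nat.factorial j : ℝ)

/-- Condition `(𝓜_{rai})`. -/
def Mrai (M : ℝ → ℕ → ℝ) : Prop :=
  ∀ p > (0:ℝ), ∃ C > (0:ℝ), ∃ p' > (0:ℝ), ∀ j k : ℕ, 1 ≤ j → j ≤ k →
    (checkSeq (M p) j) ^ ((j:ℝ)⁻¹) ≤ C * (checkSeq (M p') k) ^ ((k:ℝ)⁻¹)

/-- Condition `(𝓜_{C^ω})`. -/
def MComega (M : ℝ → ℕ → ℝ) : Prop :=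
  ∃ p > (0:ℝ),
    0 < Filter.liminf (fun j : ℕ => (checkSeq (M p) j) ^ ((j:ℝ)⁻¹)) Filter.atTop

/-- Condition `(𝓜_{dc})`. -/
def Mdc (M : ℝ → ℕ → ℝ) : Prop :=
  ∀ p > (0:ℝ), ∃ C > (0:ℝ), ∃ p' > (0:ℝ), ∀ j : ℕ, M p (j+1) ≤ C ^ (j+1) * M p' j

/-- `N°_k`: maximum of `N_ℓ·N_{j₁}⋯N_{j_ℓ}` over `j_i ∈ ℕ, j₁+⋯+j_ℓ = k`; `N°₀ = 1`. -/
def circSeq (N : ℕ → ℝ) (k : ℕ) : ℝ :=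
  if k = 0 then 1 else
    sSup {x : ℝ | ∃ (l : ℕ) (js : Fin l → ℕ), (∀ i, 1 ≤ js i) ∧ (∑ i, js i) = k ∧
      x = N l * ∏ i, N (js i)}

/-- `(rai)` for a single sequence. -/
def SeqRai (N : ℕ → ℝ) : Prop :=
  ∃ C > (0:ℝ), ∀ j k : ℕ, 1 ≤ j → j ≤ k →
    (checkSeq N j) ^ ((j:ℝ)⁻¹) ≤ C * (checkSeq N k) ^ ((k:ℝ)⁻¹)

/-- `(dc)` for a single sequence. -/
def SeqDc (N : ℕ → ℝ) : Prop := ∃ D ≥ (1:ℝ), ∀ j : ℕ, N (j+1) ≤ D ^ (j+1) * N j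

/-- `(FdB)` for a single sequence. -/
def SeqFdB (N : ℕ → ℝ) : Prop :=
  ∃ C ≥ (1:ℝ), ∃ h ≥ (1:ℝ), ∀ j : ℕ, circSeq (checkSeq N) j ≤ C * h ^ j * checkSeq N j

/-- Condition `(𝓜_{FdB})`. -/
def MFdB (M : ℝ → ℕ → ℝ) : Prop :=
  ∀ p > (0:ℝ), ∃ p' > (0:ℝ), ∃ C : ℝ, ∀ k : ℕ, 1 ≤ k →
    (circSeq (checkSeq (M p)) k / checkSeq (M p') k) ^ ((k:ℝ)⁻¹) ≤ C

/-- `L` is the log-convex minorant of `a` (within positive log-convex sequences). -/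
def IsLcMinorant (a L : ℕ → ℝ) : Prop :=
  (∀ j, 0 < L j) ∧ IsLogConvexSeq L ∧ (∀ j, L j ≤ a j) ∧
    ∀ L' : ℕ → ℝ, (∀ j, 0 < L' j) → IsLogConvexSeq L' → (∀ j, L' j ≤ a j) → ∀ j, L' j ≤ L j

/-- Holomorphic closedness of a class of functions on `S_α`. -/
def HolClosed (S : Set (ℂ → ℂ)) (α : ℝ) : Prop :=
  ∀ f ∈ S, ∀ U : Set ℂ, IsOpen U → closure (f '' Sector α) ⊆ U →
    ∀ g : ℂ → ℂ, DifferentiableOn ℂ g U → g ∘ f ∈ S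

/-- Inverse closedness of a class of functions on `S_α`. -/
def InvClosed (S : Set (ℂ → ℂ)) (α : ℝ) : Prop :=
  ∀ f ∈ S, (∃ c > (0:ℝ), ∀ z ∈ Sector α, c ≤ ‖f z‖) → (fun z => (f z)⁻¹) ∈ S

/-- The class `H_{{𝓜}}(U)` for a weight matrix. -/
def HMatClass (M : ℝ → ℕ → ℝ) (U : Set ℂ) : Set (ℂ → ℂ) :=
  {g | DifferentiableOn ℂ g U ∧ ∀ K : Set ℂ, K ⊆ U → IsCompact K →
    ∃ p > (0:ℝ), ∃ h > (0:ℝ), ∃ C : ℝ, ∀ j : ℕ, ∀ z ∈ K,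
      ‖iteratedDerivWithin j g U z‖ ≤ C * h ^ j * M p j}

/-- The class `H_{{M}}(U)` for a single sequence. -/
def HSeqClass (N : ℕ → ℝ) (U : Set ℂ) : Set (ℂ → ℂ) :=
  {g | DifferentiableOn ℂ g U ∧ ∀ K : Set ℂ, K ⊆ U → IsCompact K →
    ∃ h > (0:ℝ), ∃ C : ℝ, ∀ j : ℕ, ∀ z ∈ K,
      ‖iteratedDerivWithin j g U z‖ ≤ C * h ^ j * N j}

/-- Closedness under composition for the matrix class. -/
def CompClosedMat (M : ℝ → ℕ → ℝ) (α : ℝ) : Prop :=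
  ∀ f ∈ AMatSet M α, ∀ U : Set ℂ, IsOpen U → closure (f '' Sector α) ⊆ U →
    ∀ g ∈ HMatClass M U, g ∘ f ∈ AMatSet M α

/-- Closedness under composition for a single-sequence class. -/
def CompClosedSeq (N : ℕ → ℝ) (α : ℝ) : Prop :=
  ∀ f ∈ ASet N α, ∀ U : Set ℂ, IsOpen U → closure (f '' Sector α) ⊆ U →
    ∀ g ∈ HSeqClass N U, g ∘ f ∈ ASet N α

/-- `f` is characteristic in `A_{{L}}(S_α)`. -/
def Characteristic (L : ℕ → ℝ) (α : ℝ) (f : ℂ → ℂ) : Prop :=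
  f ∈ ASet L α ∧ ∀ N : ℕ → ℝ, (∀ j, 0 < N j) → N 0 = 1 →
    f ∈ ASet N α → ASet N α ⊆ ASet L α → ASet N α = ASet L α

/-- Coefficient `2^{-n} M_n/m_n^n` of the `T_M`-transform. -/
def coefT (M : ℕ → ℝ) (n : ℕ) : ℝ := (1/2:ℝ)^n * (M n / (M (n+1) / M n) ^ n)

/-- The sequence of quotients `m_n = M_{n+1}/M_n`. -/
def quotSeq (M : ℕ → ℝ) (n : ℕ) : ℝ := M (n+1) / M n

/-- `R_j = ∑ 2^{-n}(M_n/m_n^n) m_n^j` (as a real tsum). -/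
def Rseq (M : ℕ → ℝ) (j : ℕ) : ℝ := ∑' n : ℕ, coefT M n * (quotSeq M n) ^ j

/-- The `T_M`-transform. -/
def Ttrans (M : ℕ → ℝ) (f : ℂ → ℂ) (z : ℂ) : ℂ :=
  ∑' n : ℕ, (coefT M n : ℂ) * f ((quotSeq M n : ℂ) * z)

/-- Weight function: continuous, nondecreasing, `ω(0)=0`, nonnegative, `ω(t)→∞`. -/
def IsWeightFunction (ω : ℝ → ℝ) : Prop :=
  ContinuousOn ω (Set.Ici 0) ∧ MonotoneOn ω (Set.Ici 0) ∧ ω 0 = 0 ∧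
    (∀ t ≥ (0:ℝ), 0 ≤ ω t) ∧ Filter.Tendsto ω Filter.atTop Filter.atTop

def Om0 (ω : ℝ → ℝ) : Prop := ∀ t ∈ Set.Icc (0:ℝ) 1, ω t = 0
def Om1 (ω : ℝ → ℝ) : Prop := ∃ L ≥ (1:ℝ), ∀ t ≥ (0:ℝ), ω (2*t) ≤ L * (ω t + 1)
def Om2 (ω : ℝ → ℝ) : Prop := ∃ C > (0:ℝ), ∃ t₀ : ℝ, ∀ t ≥ t₀, ω t ≤ C * t
def Om3 (ω : ℝ → ℝ) : Prop := Real.log =o[Filter.atTop] ω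
def Om4 (ω : ℝ → ℝ) : Prop := ConvexOn ℝ Set.univ (fun t => ω (Real.exp t))
def Om5 (ω : ℝ → ℝ) : Prop := ω =o[Filter.atTop] (fun t => t)
def Om6 (ω : ℝ → ℝ) : Prop := ∃ H ≥ (1:ℝ), ∀ t ≥ (0:ℝ), 2 * ω t ≤ ω (H * t) + H

/-- Condition `(α₀)` for a weight function. -/
def Alpha0 (ω : ℝ → ℝ) : Prop :=
  ∃ C ≥ (1:ℝ), ∃ t₀ ≥ (0:ℝ), ∀ lam ≥ (1:ℝ), ∀ t ≥ t₀, ω (lam * t) ≤ C * lam * ω t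

/-- The set `W₀`. -/
def InW0 (ω : ℝ → ℝ) : Prop := IsWeightFunction ω ∧ Om0 ω ∧ Om3 ω ∧ Om4 ω

/-- The set `W`. -/
def InW (ω : ℝ → ℝ) : Prop := InW0 ω ∧ Om1 ω

/-- The Legendre–Fenchel–Young conjugate `φ*_ω`. -/
def phiStar (ω : ℝ → ℝ) (x : ℝ) : ℝ :=
  sSup {r : ℝ | ∃ y : ℝ, 0 ≤ y ∧ r = x * y - ω (Real.exp y)}

/-- The weight matrix associated with `ω`: `W^{(ℓ)}_j = exp((1/ℓ)·φ*_ω(ℓj))`. -/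
def Wmat (ω : ℝ → ℝ) (ℓ : ℝ) (j : ℕ) : ℝ := Real.exp ((1/ℓ) * phiStar ω (ℓ * (j:ℝ)))

/-- The class `A_{{ω}}(S_α)`. -/
def AOmegaSet (ω : ℝ → ℝ) (α : ℝ) : Set (ℂ → ℂ) :=
  {f | DifferentiableOn ℂ f (Sector α) ∧ ∃ ℓ > (0:ℝ), ∃ C : ℝ,
    ∀ j : ℕ, ∀ z ∈ Sector α, ‖iteratedDerivWithin j f (Sector α) z‖ ≤ C * Wmat ω ℓ j}

/-- Closedness under composition for the `ω`-class. -/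
def CompClosedOmega (ω : ℝ → ℝ) (α : ℝ) : Prop :=
  ∀ f ∈ AOmegaSet ω α, ∀ U : Set ℂ, IsOpen U → closure (f '' Sector α) ⊆ U →
    ∀ g ∈ HMatClass (Wmat ω) U, g ∘ f ∈ AOmegaSet ω α

/-- One-sided matrix comparison `𝓜 {⪯} 𝓛`: `sup_{j≥1}(M^{(p)}_j/L^{(q)}_j)^{1/j} < ∞`. -/
def MatPreceq (M L : ℝ → ℕ → ℝ) : Prop :=
  ∀ p > (0:ℝ), ∃ q > (0:ℝ), ∃ C : ℝ, ∀ j : ℕ, 1 ≤ j → (M p j / L q j) ^ ((j:ℝ)⁻¹) ≤ C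

/-- `R`-equivalence of weight matrices. -/
def REquivMat (M L : ℝ → ℕ → ℝ) : Prop := MatPreceq M L ∧ MatPreceq L M

/-!
Log-convexity makes the quotients `m_n = M_{n+1}/M_n` nondecreasing, and comparing `M_j` with `M_n`
through the quotients between them gives `M_n m_n^j ≤ M_j m_n^n` for all `j, n`. Hence the `n`-th
term of the `j`-times differentiated series is at most `2^{-n} M_j sup ‖f^{(j)}‖ ≤ 2^{-n} C₀ A^j L_j M_j`
on the sector, which is invariant under dilations by the `m_n > 0`. These geometric majorants give
normal convergence of every differentiated series, hence termwise differentiation, termwise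
limits at `0` by dominated convergence, and the bound with the factor `∑ 2^{-n} = 2`.
-/

open Set

lemma isOpen_sector {α : ℝ} (hα2 : α ≤ 2) : IsOpen (Sector α) := by
  have hcont : ContinuousOn (fun z : ℂ => |arg z|) slitPlane :=
    fun z hz => (continuousAt_arg hz).abs.continuousWithinAt
  convert hcont.isOpen_inter_preimage isOpen_slitPlane (isOpen_Iio (a := α * Real.pi / 2)) using 1
  ext z
  refine ⟨fun ⟨hz0, hz⟩ => ⟨mem_slitPlane_iff_arg.2 ⟨fun hπ => ?_, hz0⟩, hz⟩,
    fun ⟨hz, harg⟩ => ⟨slitPlane_ne_zero hz, harg⟩⟩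
  rw [hπ, abs_of_pos Real.pi_pos] at hz
  nlinarith [Real.pi_pos]

lemma ofReal_mul_mem_sector {α t : ℝ} (ht : 0 < t) {z : ℂ} (hz : z ∈ Sector α) :
    (t : ℂ) * z ∈ Sector α :=
  ⟨mul_ne_zero (ofReal_ne_zero.2 ht.ne') hz.1, by rw [arg_real_mul z ht]; exact hz.2⟩

section LogConvex

variable {M : ℕ → ℝ}

lemma quotSeq_pos (hMpos : ∀ j, 0 < M j) (n : ℕ) : 0 < quotSeq M n :=
  div_pos (hMpos _) (hMpos _)

lemma mul_quotSeq (hMpos : ∀ j, 0 < M j) (n : ℕ) : M n * quotSeq M n = M (n + 1) :=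
  mul_div_cancel₀ _ (hMpos n).ne'

lemma IsLogConvexSeq.monotone_quotSeq (hMlc : IsLogConvexSeq M) (hMpos : ∀ j, 0 < M j) :
    Monotone (quotSeq M) := by
  refine monotone_nat_of_le_succ fun n => ?_
  rw [quotSeq, quotSeq, div_le_div_iff₀ (hMpos n) (hMpos (n + 1))]
  nlinarith [hMlc n]

lemma IsLogConvexSeq.mul_quotSeq_pow_le (hMlc : IsLogConvexSeq M) (hMpos : ∀ j, 0 < M j)
    (a b : ℕ) : M a * quotSeq M a ^ b ≤ M (a + b) := by
  induction b with
  | zero => simp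
  | succ b ih =>
    calc M a * quotSeq M a ^ (b + 1) = M a * quotSeq M a ^ b * quotSeq M a := by ring
      _ ≤ M (a + b) * quotSeq M (a + b) :=
        mul_le_mul ih (hMlc.monotone_quotSeq hMpos (Nat.le_add_right a b))
          (quotSeq_pos hMpos a).le (hMpos _).le
      _ = M (a + b + 1) := mul_quotSeq hMpos _

lemma IsLogConvexSeq.le_mul_quotSeq_pow (hMlc : IsLogConvexSeq M) (hMpos : ∀ j, 0 < M j)
    (a b : ℕ) : M (a + b) ≤ M a * quotSeq M (a + b) ^ b := by
  induction b with
  | zero => simp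
  | succ b ih =>
    have hq : quotSeq M (a + b) ≤ quotSeq M (a + b + 1) :=
      hMlc.monotone_quotSeq hMpos (Nat.le_succ _)
    calc M (a + b + 1) = M (a + b) * quotSeq M (a + b) := (mul_quotSeq hMpos _).symm
      _ ≤ M a * quotSeq M (a + b) ^ b * quotSeq M (a + b) :=
        mul_le_mul_of_nonneg_right ih (quotSeq_pos hMpos _).le
      _ = M a * quotSeq M (a + b) ^ (b + 1) := by ring
      _ ≤ M a * quotSeq M (a + b + 1) ^ (b + 1) := by
        gcongr
        · exact (hMpos a).le
        · exact (quotSeq_pos hMpos _).le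

lemma IsLogConvexSeq.mul_quotSeq_pow_le_mul_pow (hMlc : IsLogConvexSeq M)
    (hMpos : ∀ j, 0 < M j) (n j : ℕ) :
    M n * quotSeq M n ^ j ≤ M j * quotSeq M n ^ n := by
  have hq := quotSeq_pos hMpos
  rcases le_total n j with h | h
  · obtain ⟨b, rfl⟩ := Nat.exists_eq_add_of_le h
    calc M n * quotSeq M n ^ (n + b) = M n * quotSeq M n ^ b * quotSeq M n ^ n := by ring
      _ ≤ M (n + b) * quotSeq M n ^ n :=
        mul_le_mul_of_nonneg_right (hMlc.mul_quotSeq_pow_le hMpos n b) (pow_pos (hq n) n).le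
  · obtain ⟨b, rfl⟩ := Nat.exists_eq_add_of_le h
    calc M (j + b) * quotSeq M (j + b) ^ j
        ≤ M j * quotSeq M (j + b) ^ b * quotSeq M (j + b) ^ j :=
          mul_le_mul_of_nonneg_right (hMlc.le_mul_quotSeq_pow hMpos j b) (pow_pos (hq _) j).le
      _ = M j * quotSeq M (j + b) ^ (j + b) := by ring

lemma coefT_mul_quotSeq_pow_nonneg (hMpos : ∀ j, 0 < M j) (n j : ℕ) :
    0 ≤ coefT M n * quotSeq M n ^ j := by
  have := hMpos n
  have := quotSeq_pos hMpos n
  unfold coefT quotSeq at *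
  positivity

lemma IsLogConvexSeq.coefT_mul_quotSeq_pow_le (hMlc : IsLogConvexSeq M) (hMpos : ∀ j, 0 < M j)
    (n j : ℕ) : coefT M n * quotSeq M n ^ j ≤ (1 / 2) ^ n * M j := by
  have hqn := pow_pos (quotSeq_pos hMpos n) n
  change (1 / 2) ^ n * (M n / quotSeq M n ^ n) * quotSeq M n ^ j ≤ _
  rw [mul_assoc]
  gcongr
  rw [div_mul_eq_mul_div, div_le_iff₀ hqn]
  exact hMlc.mul_quotSeq_pow_le_mul_pow hMpos n j

end LogConvex

section DilationSeries

variable {U : Set ℂ} {f : ℂ → ℂ}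

lemma DifferentiableOn.differentiableOn_iteratedDerivWithin_of_isOpen
    (hf : DifferentiableOn ℂ f U) (hU : IsOpen U) (k : ℕ) :
    DifferentiableOn ℂ (iteratedDerivWithin k f U) U :=
  (hf.contDiffOn (n := ⊤) hU).differentiableOn_iteratedDerivWithin
    (WithTop.coe_lt_top _) hU.uniqueDiffOn

lemma iteratedDerivWithin_const_mul_comp_const_mul (hU : IsOpen U)
    (hf : DifferentiableOn ℂ f U) {m : ℂ} (hm : MapsTo (m * ·) U U) (c : ℂ) (k : ℕ) {z : ℂ}
    (hz : z ∈ U) :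
    iteratedDerivWithin k (fun w => c * f (m * w)) U z
      = c * m ^ k * iteratedDerivWithin k f U (m * z) := by
  rw [iteratedDerivWithin_const_mul_field, iteratedDerivWithin_comp_const_smul hz
    hU.uniqueDiffOn (hf.contDiffOn hU) m hm, smul_eq_mul, mul_assoc]

variable {c m : ℕ → ℂ} {u : ℕ → ℕ → ℝ}

lemma iteratedDerivWithin_tsum_const_mul_comp_const_mul (hU : IsOpen U)
    (hf : DifferentiableOn ℂ f U) (hm : ∀ n, MapsTo (m n * ·) U U) (hu : ∀ k, Summable (u k))
    (hbound : ∀ k n, ∀ z ∈ U, ‖c n * m n ^ k * iteratedDerivWithin k f U (m n * z)‖ ≤ u k n)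
    (k : ℕ) {z : ℂ} (hz : z ∈ U) :
    iteratedDerivWithin k (fun w => ∑' n, c n * f (m n * w)) U z
      = ∑' n, c n * m n ^ k * iteratedDerivWithin k f U (m n * z) := by
  have hterm (k n : ℕ) : EqOn (iteratedDerivWithin k (fun w => c n * f (m n * w)) U)
      (fun w => c n * m n ^ k * iteratedDerivWithin k f U (m n * w)) U :=
    fun w hw => iteratedDerivWithin_const_mul_comp_const_mul hU hf (hm n) (c n) k hw
  have hsum (w : ℂ) (hw : w ∈ U) : Summable fun n => c n * f (m n * w) :=
    .of_norm_bounded (hu 0) fun n => by simpa using hbound 0 n w hw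
  have hlocunif (l : ℕ) : SummableLocallyUniformlyOn
      (fun n => iteratedDerivWithin l (fun w => c n * f (m n * w)) U) U :=
    SummableLocallyUniformlyOn_of_locally_bounded hU fun K hK _ =>
      ⟨u l, hu l, fun n w hw => hterm l n (hK hw) ▸ hbound l n w (hK hw)⟩
  have hdiff (n l : ℕ) : DifferentiableOn ℂ
      (iteratedDerivWithin l (fun w => c n * f (m n * w)) U) U :=
    (DifferentiableOn.const_mul (hf.comp (differentiableOn_id.const_mul _) (hm n)) _)
      |>.differentiableOn_iteratedDerivWithin_of_isOpen hU l
  rw [iteratedDerivWithin_tsum k hU hz hsum (fun l _ _ => hlocunif l)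
    fun n l w _ hw => (hdiff n l).differentiableAt (hU.mem_nhds hw)]
  exact tsum_congr fun n => hterm k n hz

lemma tendsto_tsum_mul_comp_const_mul {g : ℂ → ℂ} {a : ℕ → ℂ} {v : ℕ → ℝ} {b : ℂ}
    (hm : ∀ n, MapsTo (m n * ·) U U) (hv : Summable v)
    (hbound : ∀ n, ∀ z ∈ U, ‖a n * g (m n * z)‖ ≤ v n) (hg : Tendsto g (𝓝[U] 0) (𝓝 b)) :
    Tendsto (fun z => ∑' n, a n * g (m n * z)) (𝓝[U] 0) (𝓝 ((∑' n, a n) * b)) := by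
  rw [← tsum_mul_right]
  refine tendsto_tsum_of_dominated_convergence hv (fun n => ?_)
    (eventually_mem_nhdsWithin.mono fun z hz n => hbound n z hz)
  have hdil : Tendsto (m n * ·) (𝓝[U] 0) (𝓝[U] 0) := by
    simpa using (continuous_const_mul (m n)).continuousWithinAt.tendsto_nhdsWithin (x := 0) (hm n)
  exact (hg.comp hdil).const_mul (a n)

end DilationSeries

lemma norm_tsum_le_two_mul {E : Type*} [NormedAddCommGroup E] {g : ℕ → E} {B : ℝ}
    (hg : ∀ n, ‖g n‖ ≤ (1 / 2) ^ n * B) :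
    ‖∑' n, g n‖ ≤ 2 * B :=
  tsum_of_norm_bounded (by simpa [mul_comm] using hasSum_geometric_two.mul_right B) hg

theorem stmt_4_general (M : ℕ → ℝ) (hMpos : ∀ j, 0 < M j) (hMlc : IsLogConvexSeq M)
    (L : ℕ → ℝ)
    (α : ℝ) (hα2 : α ≤ 2) (A : ℝ)
    (f : ℂ → ℂ) (hf : DifferentiableOn ℂ f (Sector α))
    (C₀ : ℝ)
    (hfC : ∀ j : ℕ, ∀ z ∈ Sector α,
      ‖iteratedDerivWithin j f (Sector α) z‖ ≤ C₀ * A ^ j * L j) :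
    -- (i) normal convergence on S_α and holomorphy of T_M(f)
    ((∃ u : ℕ → ℝ, Summable u ∧ ∀ n : ℕ, ∀ z ∈ Sector α,
        ‖(coefT M n : ℂ) * f ((quotSeq M n : ℂ) * z)‖ ≤ u n) ∧
      (∀ z ∈ Sector α, Summable (fun n : ℕ => (coefT M n : ℂ) * f ((quotSeq M n : ℂ) * z))) ∧
      DifferentiableOn ℂ (Ttrans M f) (Sector α)) ∧
    -- (ii) termwise differentiation
    ((∀ j : ℕ, ∀ z ∈ Sector α,
        iteratedDerivWithin j (Ttrans M f) (Sector α) z =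
          ∑' n : ℕ, ((coefT M n * (quotSeq M n) ^ j : ℝ) : ℂ) *
            iteratedDerivWithin j f (Sector α) ((quotSeq M n : ℂ) * z)) ∧
      (∀ j : ℕ, ∀ c : ℂ,
        Filter.Tendsto (iteratedDerivWithin j f (Sector α))
          (nhdsWithin 0 (Sector α)) (nhds c) →
        Filter.Tendsto (iteratedDerivWithin j (Ttrans M f) (Sector α))
          (nhdsWithin 0 (Sector α)) (nhds ((Rseq M j : ℂ) * c)))) ∧
    -- (iii) T_M(f) ∈ A_{LM,A}(S_α) with norm at most 2‖f‖_{L,A}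
    (∀ j : ℕ, ∀ z ∈ Sector α,
      ‖iteratedDerivWithin j (Ttrans M f) (Sector α) z‖ ≤ 2 * C₀ * A ^ j * (L j * M j)) := by
  have hU := isOpen_sector hα2
  have hm (n : ℕ) : MapsTo ((quotSeq M n : ℂ) * ·) (Sector α) (Sector α) :=
    fun _ => ofReal_mul_mem_sector (quotSeq_pos hMpos n)
  have hbound (j n : ℕ) (z : ℂ) (hz : z ∈ Sector α) :
      ‖((coefT M n * quotSeq M n ^ j : ℝ) : ℂ) *
        iteratedDerivWithin j f (Sector α) ((quotSeq M n : ℂ) * z)‖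
        ≤ (1 / 2) ^ n * (C₀ * A ^ j * L j * M j) := by
    rw [norm_mul, norm_real, Real.norm_of_nonneg (coefT_mul_quotSeq_pow_nonneg hMpos n j)]
    calc _ ≤ (1 / 2) ^ n * M j * (C₀ * A ^ j * L j) :=
          mul_le_mul (hMlc.coefT_mul_quotSeq_pow_le hMpos n j) (hfC j _ (hm n hz))
            (norm_nonneg _) (by have := hMpos j; positivity)
      _ = _ := by ring
  have hsum (j : ℕ) := summable_geometric_two.mul_right (C₀ * A ^ j * L j * M j)
  have hderiv (j : ℕ) (z : ℂ) (hz : z ∈ Sector α) :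
      iteratedDerivWithin j (Ttrans M f) (Sector α) z =
        ∑' n : ℕ, ((coefT M n * quotSeq M n ^ j : ℝ) : ℂ) *
          iteratedDerivWithin j f (Sector α) ((quotSeq M n : ℂ) * z) := by
    push_cast at hbound ⊢
    exact iteratedDerivWithin_tsum_const_mul_comp_const_mul hU hf hm hsum hbound j hz
  have hbound₀ (n : ℕ) (z : ℂ) (hz : z ∈ Sector α) :
      ‖(coefT M n : ℂ) * f ((quotSeq M n : ℂ) * z)‖ ≤ (1 / 2) ^ n * (C₀ * A ^ 0 * L 0 * M 0) := by
    simpa using hbound 0 n z hz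
  refine ⟨⟨⟨_, hsum 0, hbound₀⟩, fun z hz => .of_norm_bounded (hsum 0) (hbound₀ · z hz), ?_⟩,
    ⟨hderiv, fun j c hc => ?_⟩, fun j z hz => ?_⟩
  · exact differentiableOn_tsum_of_summable_norm (hsum 0)
      (fun n => (hf.comp (differentiableOn_id.const_mul _) (hm n)).const_mul _) hU hbound₀
  · rw [Rseq, ofReal_tsum]
    refine (tendsto_tsum_mul_comp_const_mul hm (hsum j) (hbound j) hc).congr' ?_
    filter_upwards [eventually_mem_nhdsWithin] with z hz using (hderiv j z hz).symm
  · calc _ ≤ 2 * (C₀ * A ^ j * L j * M j) := by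
          rw [hderiv j z hz]
          exact norm_tsum_le_two_mul fun n => hbound j n z hz
      _ = _ := by ring

/-- the `T_M`-transform of `f ∈ A_{L,A}(S_α)`: normal convergence and holomorphy,
termwise differentiation and limits at `0`, and the bound `‖T_M f‖_{LM,A} ≤ 2‖f‖_{L,A}`. -/
theorem stmt_4 (M : ℕ → ℝ) (hMpos : ∀ j, 0 < M j) (hM0 : M 0 = 1) (hMlc : IsLogConvexSeq M)
    (L : ℕ → ℝ) (hLpos : ∀ j, 0 < L j) (hL0 : L 0 = 1)
    (α : ℝ) (hα : 0 < α) (hα2 : α ≤ 2) (A : ℝ) (hA : 0 < A)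
    (f : ℂ → ℂ) (hf : DifferentiableOn ℂ f (Sector α))
    (C₀ : ℝ)
    (hfC : ∀ j : ℕ, ∀ z ∈ Sector α,
      ‖iteratedDerivWithin j f (Sector α) z‖ ≤ C₀ * A ^ j * L j) :
    -- (i) normal convergence on S_α and holomorphy of T_M(f)
    ((∃ u : ℕ → ℝ, Summable u ∧ ∀ n : ℕ, ∀ z ∈ Sector α,
        ‖(coefT M n : ℂ) * f ((quotSeq M n : ℂ) * z)‖ ≤ u n) ∧
      (∀ z ∈ Sector α, Summable (fun n : ℕ => (coefT M n : ℂ) * f ((quotSeq M n : ℂ) * z))) ∧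
      DifferentiableOn ℂ (Ttrans M f) (Sector α)) ∧
    -- (ii) termwise differentiation
    ((∀ j : ℕ, ∀ z ∈ Sector α,
        iteratedDerivWithin j (Ttrans M f) (Sector α) z =
          ∑' n : ℕ, ((coefT M n * (quotSeq M n) ^ j : ℝ) : ℂ) *
            iteratedDerivWithin j f (Sector α) ((quotSeq M n : ℂ) * z)) ∧
      (∀ j : ℕ, ∀ c : ℂ,
        Filter.Tendsto (iteratedDerivWithin j f (Sector α))
          (nhdsWithin 0 (Sector α)) (nhds c) →
        Filter.Tendsto (iteratedDerivWithin j (Ttrans M f) (Sector α))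
          (nhdsWithin 0 (Sector α)) (nhds ((Rseq M j : ℂ) * c)))) ∧
    -- (iii) T_M(f) ∈ A_{LM,A}(S_α) with norm at most 2‖f‖_{L,A}
    (∀ j : ℕ, ∀ z ∈ Sector α,
      ‖iteratedDerivWithin j (Ttrans M f) (Sector α) z‖ ≤ 2 * C₀ * A ^ j * (L j * M j)) :=
  stmt_4_general M hMpos hMlc L α hα2 A f hf C₀ hfC
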